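/- arXiv:1409.6748 — 2 statements merged into one kernel-verified Lean document; each statement's English description precedes it below -/
import Mathlib

section
/- A finite simple graph admits a perfect elimination ordering (an ordering of the vertices such that for every vertex v, the neighbors of v among the vertices less than or equal to v that precede v form a clique in the induced subgraph on vertices ≤ v) if and only if the graph is chordal (every cycle of length at least 4 has a chord). -/
open SimpleGraph

/-- A cycle (walk) in a graph has a chord if two of its vertices are adjacent in the graph
but the corresponding edge is not an edge of the cycle. -/
def SimpleGraph.Walk.HasChord {V : Type*} {G : SimpleGraph V} {v : V} (c : G.Walk v v) : Prop :=
  ∃ a b : V, a ∈ c.support ∧ b ∈ c.support ∧ G.Adj a b ∧ s(a, b) ∉ c.edges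

/-- A graph is chordal if every cycle with more than three vertices has a chord. -/
def SimpleGraph.IsChordal {V : Type*} (G : SimpleGraph V) : Prop :=
  ∀ (v : V) (c : G.Walk v v), c.IsCycle → 3 < c.length → c.HasChord


/-!
In a perfect elimination order, the last vertex `m` of a cycle of length at least four has its
two cycle-neighbours earlier than itself, so they are adjacent: a chord.

Conversely (Dirac), in a chordal graph every minimal `a`-`b` separator `S` is a clique: two
non-adjacent `s, t ∈ S` both have neighbours on the side of `a` and on the side of `b`, and
shortest `s`-`t` paths through the two sides form a chordless cycle of length at least four.
Splitting along `S` and inducting on the number of vertices, each side contains a vertex that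
is simplicial in the whole graph, and a given clique misses one of the two sides. Removing a
simplicial vertex and ordering the rest recursively gives a perfect elimination order with the
simplicial vertex last.
-/

namespace SimpleGraph

variable {V : Type*} {G : SimpleGraph V}

def IsSimplicial (G : SimpleGraph V) (v : V) : Prop :=
  G.IsClique (G.neighborSet v)

def IsPerfectEliminationOrder (G : SimpleGraph V) (f : V → ℕ) : Prop :=
  Function.Injective f ∧
    ∀ v u w : V, f u < f v → f w < f v → u ≠ w → G.Adj u v → G.Adj w v → G.Adj u w

namespace Walk

variable {u v w : V}

lemma IsCycle.mk_snd_penultimate_notMem_edges {c : G.Walk u u} (hc : c.IsCycle)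
    (hlen : 3 < c.length) : s(c.snd, c.penultimate) ∉ c.edges := by
  obtain ⟨w, h, q, rfl⟩ : ∃ (w : V) (h : G.Adj u w) (q : G.Walk w u), c = cons h q :=
    ⟨_, _, _, (c.cons_tail_eq hc.not_nil).symm⟩
  rw [cons_isCycle_iff] at hc
  rw [length_cons] at hlen
  have hq : ¬ q.Nil := by rw [← length_eq_zero_iff]; omega
  rw [snd_cons, penultimate_cons_of_not_nil _ _ hq, edges_cons, List.mem_cons]
  rintro (he | he)
  · exact (q.adj_penultimate hq).ne (by aesop)
  · have h1 := hc.1.eq_snd_of_mem_edges he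
    have := hc.1.getVert_injOn (by simp) (by simp; omega) h1
    simp only [Nat.pred_eq_succ_iff, zero_add] at this
    omega

theorem HasChord.of_rotate [DecidableEq V] {c : G.Walk v v} (hu : u ∈ c.support)
    (h : (c.rotate u hu).HasChord) : c.HasChord := by
  obtain ⟨a, b, ha, hb, hab, hn⟩ := h
  rw [mem_support_rotate_iff] at ha hb
  exact ⟨a, b, ha, hb, hab, fun h' => hn ((rotate_edges c u hu).perm.mem_iff.mpr h')⟩

lemma IsChordless.reverse {p : G.Walk u v} (hp : p.IsChordless) : p.reverse.IsChordless := by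
  refine isChordless_iff_forall_mem_edges.mpr fun x y hx hy hxy => ?_
  rw [support_reverse, List.mem_reverse] at hx hy
  rw [edges_reverse, List.mem_reverse]
  exact hp.mem_edges hx hy hxy

lemma IsChordless.append {p : G.Walk u v} {q : G.Walk v w} (hp : p.IsChordless)
    (hq : q.IsChordless)
    (hpq : ∀ x ∈ p.support, ∀ y ∈ q.support, G.Adj x y → x ∈ q.support ∨ y ∈ p.support) :
    (p.append q).IsChordless := by
  have hp' : ∀ ⦃x y⦄, x ∈ p.support → y ∈ p.support → G.Adj x y →
      s(x, y) ∈ (p.append q).edges := fun x y hx hy hxy => by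
    rw [edges_append]
    exact List.mem_append_left _ (hp.mem_edges hx hy hxy)
  have hq' : ∀ ⦃x y⦄, x ∈ q.support → y ∈ q.support → G.Adj x y →
      s(x, y) ∈ (p.append q).edges := fun x y hx hy hxy => by
    rw [edges_append]
    exact List.mem_append_right _ (hq.mem_edges hx hy hxy)
  have hmixed : ∀ ⦃x y⦄, x ∈ p.support → y ∈ q.support → G.Adj x y →
      s(x, y) ∈ (p.append q).edges := fun x y hx hy hxy =>
    (hpq x hx y hy hxy).elim (fun hx' => hq' hx' hy hxy) (fun hy' => hp' hx hy' hxy)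
  refine isChordless_iff_forall_mem_edges.mpr fun x y hx hy hxy => ?_
  rw [mem_support_append_iff] at hx hy
  rcases hx with hx | hx <;> rcases hy with hy | hy
  · exact hp' hx hy hxy
  · exact hmixed hx hy hxy
  · exact Sym2.eq_swap ▸ hmixed hy hx hxy.symm
  · exact hq' hx hy hxy

def IsShortestIn (P : Set V) (p : G.Walk u v) : Prop :=
  (∀ z ∈ p.support, z ∈ P) ∧ ∀ q : G.Walk u v, (∀ z ∈ q.support, z ∈ P) → p.length ≤ q.length

lemma IsShortestIn.isPath {P : Set V} {p : G.Walk u v} (hp : p.IsShortestIn P) : p.IsPath := by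
  classical
  have hb : p.bypass = p := bypass_eq_self_of_length_le_length_bypass p <|
    hp.2 _ fun z hz => hp.1 z (support_bypass_subset_support p hz)
  exact hb ▸ bypass_isPath p

/-- An edge from `x` to a later vertex `y` would shortcut `r` unless it is the first edge
of `r`. -/
lemma IsShortestIn.mk_mem_edges_of_mem_support_right {P : Set V} {x y : V} {q : G.Walk u x}
    {r : G.Walk x v} (hp : (q.append r).IsShortestIn P) (hy : y ∈ r.support) (hxy : G.Adj x y) :
    s(x, y) ∈ (q.append r).edges := by
  obtain ⟨r₁, r₂, rfl⟩ := mem_support_iff_exists_append.mp hy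
  have hshort : (q.append (cons hxy r₂)).length ≥ (q.append (r₁.append r₂)).length := by
    refine hp.2 _ fun z hz => hp.1 z ?_
    simp only [mem_support_append_iff, support_cons, List.mem_cons] at hz ⊢
    rcases hz with hz | rfl | hz
    · exact .inl hz
    · exact .inl (end_mem_support q)
    · exact .inr (.inr hz)
  simp only [length_append, length_cons] at hshort
  have hr₁ : r₁.length = 1 := by
    have : r₁.length ≠ 0 := fun h => hxy.ne (eq_of_length_eq_zero h)
    omega
  have hsnd : r₁.snd = y := by rw [snd, ← hr₁, getVert_length]
  have hnil : ¬ r₁.Nil := by rw [← length_eq_zero_iff]; omega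
  have hmem : s(x, y) ∈ r₁.edges := by simpa [hsnd] using r₁.mk_start_snd_mem_edges hnil
  simp [hmem]

lemma IsShortestIn.isChordless {P : Set V} {p : G.Walk u v} (hp : p.IsShortestIn P) :
    p.IsChordless := by
  refine isChordless_iff_forall_mem_edges.mpr fun x y hx hy hxy => ?_
  obtain ⟨q, r, rfl⟩ := mem_support_iff_exists_append.mp hx
  rcases (mem_support_append_iff _ _).mp hy with hy | hy
  · obtain ⟨q₁, q₂, rfl⟩ := mem_support_iff_exists_append.mp hy
    rw [← append_assoc] at hp ⊢
    exact Sym2.eq_swap ▸ hp.mk_mem_edges_of_mem_support_right (by simp) hxy.symm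
  · exact hp.mk_mem_edges_of_mem_support_right hy hxy

lemma IsPath.start_notMem_support_tail {p : G.Walk u v} (hp : p.IsPath) :
    u ∉ p.support.tail := by
  have h := hp.support_nodup
  rw [← cons_tail_support] at h
  exact (List.nodup_cons.mp h).1

lemma two_le_length_of_not_adj (p : G.Walk u v) (huv : u ≠ v) (h : ¬ G.Adj u v) :
    2 ≤ p.length := by
  have h0 : p.length ≠ 0 := fun h0 => huv (eq_of_length_eq_zero h0)
  have h1 : p.length ≠ 1 := fun h1 => h (adj_of_length_eq_one h1)
  omega

lemma IsPath.isCycle_append_reverse {p q : G.Walk u v} (hp : p.IsPath) (hq : q.IsPath)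
    (hpq : ∀ z ∈ p.support, z ∈ q.support → z = u ∨ z = v) (hlen : 2 ≤ p.length) :
    (p.append q.reverse).IsCycle := by
  refine hp.isCycle_append hq.reverse (fun z hzp hzq => ?_) (.inl hlen)
  have hzq' : z ∈ q.support := by simpa using List.mem_of_mem_tail hzq
  rcases hpq z (List.mem_of_mem_tail hzp) hzq' with rfl | rfl
  · exact hp.start_notMem_support_tail hzp
  · exact hq.reverse.start_notMem_support_tail hzq

lemma IsChordless.append_reverse {p q : G.Walk u v} (hp : p.IsChordless) (hq : q.IsChordless)
    (hpq : ∀ x ∈ p.support, ∀ y ∈ q.support, G.Adj x y → x = u ∨ x = v ∨ y = u ∨ y = v) :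
    (p.append q.reverse).IsChordless := by
  refine hp.append hq.reverse fun x hx y hy hxy => ?_
  rw [support_reverse, List.mem_reverse] at hy ⊢
  rcases hpq x hx y hy hxy with rfl | rfl | rfl | rfl <;> simp

end Walk

open Walk in
theorem IsPerfectEliminationOrder.isChordal {f : V → ℕ} (hf : G.IsPerfectEliminationOrder f) :
    G.IsChordal := by
  classical
  intro v c hc hlen
  obtain ⟨m, hm, hmax⟩ := c.support.toFinset.exists_max_image f ⟨v, by simp⟩
  rw [List.mem_toFinset] at hm
  refine HasChord.of_rotate hm ?_
  set c' := c.rotate m hm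
  have hc' : c'.IsCycle := hc.rotate hm
  have hnil : ¬ c'.Nil := hc'.not_nil
  have hlt : ∀ z ∈ c'.support, z ≠ m → f z < f m := fun z hz hzm =>
    (hmax z (by simpa [c'] using hz)).lt_of_ne (hf.1.ne hzm)
  refine ⟨c'.snd, c'.penultimate, c'.getVert_mem_support 1, c'.getVert_mem_support _,
    hf.2 m _ _ (hlt _ (c'.getVert_mem_support 1) (c'.adj_snd hnil).ne')
      (hlt _ (c'.getVert_mem_support _) (c'.adj_penultimate hnil).ne)
      hc'.snd_ne_penultimate (c'.adj_snd hnil).symm (c'.adj_penultimate hnil),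
    hc'.mk_snd_penultimate_notMem_edges (by simpa [c'] using hlen)⟩


variable {P Q : Set V} {u v w : V}

def ReachableIn (G : SimpleGraph V) (P : Set V) (u v : V) : Prop :=
  ∃ p : G.Walk u v, ∀ z ∈ p.support, z ∈ P

namespace ReachableIn

lemma refl (hu : u ∈ P) : G.ReachableIn P u u :=
  ⟨.nil, by simpa using hu⟩

lemma right_mem (h : G.ReachableIn P u v) : v ∈ P :=
  h.elim fun p hp => hp v p.end_mem_support

lemma symm (h : G.ReachableIn P u v) : G.ReachableIn P v u :=
  h.elim fun p hp => ⟨p.reverse, by simpa using hp⟩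

lemma trans (h : G.ReachableIn P u v) (h' : G.ReachableIn P v w) : G.ReachableIn P u w := by
  obtain ⟨p, hp⟩ := h
  obtain ⟨q, hq⟩ := h'
  exact ⟨p.append q, fun z hz => ((Walk.mem_support_append_iff _ _).mp hz).elim (hp z) (hq z)⟩

lemma mono (h : G.ReachableIn P u v) (hPQ : P ⊆ Q) : G.ReachableIn Q u v :=
  h.elim fun p hp => ⟨p, fun z hz => hPQ (hp z hz)⟩

lemma trans_adj (h : G.ReachableIn P u v) (hvw : G.Adj v w) (hw : w ∈ P) :
    G.ReachableIn P u w :=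
  h.trans ⟨hvw.toWalk, by simp [h.right_mem, hw]⟩

lemma reachableIn_setOf (h : G.ReachableIn P u v) :
    G.ReachableIn {z | G.ReachableIn P u z} u v := by
  classical
  obtain ⟨p, hp⟩ := h
  exact ⟨p, fun z hz =>
    ⟨p.takeUntil z hz, fun y hy => hp y (p.support_takeUntil_subset_support hz hy)⟩⟩

lemma exists_isShortestIn (h : G.ReachableIn P u v) : ∃ p : G.Walk u v, p.IsShortestIn P := by
  obtain ⟨p, hp, hmin⟩ := WellFounded.has_min (measure Walk.length).wf
    {p : G.Walk u v | ∀ z ∈ p.support, z ∈ P} h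
  exact ⟨p, hp, fun q hq => not_lt.mp (hmin q hq)⟩

end ReachableIn

variable {S : Set V} {a b s t : V}

def IsSeparator (G : SimpleGraph V) (S : Set V) (a b : V) : Prop :=
  a ∉ S ∧ b ∉ S ∧ ¬ G.ReachableIn Sᶜ a b

lemma isSeparator_comm : G.IsSeparator S a b ↔ G.IsSeparator S b a :=
  ⟨fun ⟨ha, hb, h⟩ => ⟨hb, ha, fun h' => h h'.symm⟩,
    fun ⟨hb, ha, h⟩ => ⟨ha, hb, fun h' => h h'.symm⟩⟩

lemma IsSeparator.not_reachableIn_both (hS : G.IsSeparator S a b) (ha : G.ReachableIn Sᶜ a v)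
    (hb : G.ReachableIn Sᶜ b v) : False :=
  hS.2.2 (ha.trans hb.symm)

lemma exists_minimal_isSeparator [Finite V] (hab : a ≠ b) (hadj : ¬ G.Adj a b) :
    ∃ S, Minimal (G.IsSeparator · a b) S := by
  refine exists_minimal_le_of_wellFoundedLT _ ({a, b}ᶜ) ⟨by simp, by simp, ?_⟩ |>.imp fun _ h => h.2
  rintro ⟨p, hp⟩
  cases p with
  | nil => exact hab rfl
  | @cons _ c _ h q =>
    rcases (by simpa using hp c (by simp) : c = a ∨ c = b) with rfl | rfl
    · exact h.ne rfl
    · exact hadj h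

/-- Minimality lets every vertex of `S` be dropped, which opens a path from `a` to `b` through
it: its predecessor on that path lies on the side of `a`. -/
lemma Minimal.exists_adj_of_isSeparator (hS : Minimal (G.IsSeparator · a b) S) (hs : s ∈ S) :
    ∃ y, G.ReachableIn Sᶜ a y ∧ G.Adj s y := by
  have ⟨ha, hb, hsep⟩ := hS.prop
  have hopen : G.ReachableIn (S \ {s})ᶜ a b := by
    by_contra h
    exact hS.not_prop_of_lt (Set.sdiff_singleton_ssubset.mpr hs)
      ⟨fun h' => ha h'.1, fun h' => hb h'.1, h⟩
  obtain ⟨p, hp⟩ := hopen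
  obtain ⟨d, hd, hfst, hsnd⟩ := p.exists_boundary_dart {z | G.ReachableIn Sᶜ a z}
    (ReachableIn.refl ha) hsep
  have hsnd_S : d.snd ∈ S := by
    by_contra h
    exact hsnd (hfst.trans_adj d.adj h)
  have hsnd_s : d.snd = s := by
    by_contra h
    exact hp _ (p.dart_snd_mem_support_of_mem_darts hd) ⟨hsnd_S, h⟩
  exact ⟨d.fst, hfst, hsnd_s ▸ d.adj.symm⟩

lemma Minimal.reachableIn_of_isSeparator (hS : Minimal (G.IsSeparator · a b) S) (hs : s ∈ S)
    (ht : t ∈ S) : G.ReachableIn ({z | G.ReachableIn Sᶜ a z} ∪ {s, t}) s t := by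
  obtain ⟨x, hx, hsx⟩ := hS.exists_adj_of_isSeparator hs
  obtain ⟨y, hy, hty⟩ := hS.exists_adj_of_isSeparator ht
  have hxy : G.ReachableIn {z | G.ReachableIn Sᶜ a z} x y :=
    hx.reachableIn_setOf.symm.trans hy.reachableIn_setOf
  exact ((ReachableIn.refl (by simp)).trans_adj hsx (.inl hx)).trans
    ((hxy.mono Set.subset_union_left).trans_adj hty.symm (by simp))

open Walk in
theorem IsChordal.isClique_of_minimal_isSeparator (hG : G.IsChordal)
    (hS : Minimal (G.IsSeparator · a b) S) : G.IsClique S := by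
  have hS' : Minimal (G.IsSeparator · b a) S := by simpa only [isSeparator_comm] using hS
  intro s hs t ht hst
  by_contra hnadj
  obtain ⟨p, hp⟩ := (hS.reachableIn_of_isSeparator hs ht).exists_isShortestIn
  obtain ⟨q, hq⟩ := (hS'.reachableIn_of_isSeparator hs ht).exists_isShortestIn
  have hsides : ∀ x ∈ p.support, ∀ y ∈ q.support, x = y ∨ G.Adj x y →
      x = s ∨ x = t ∨ y = s ∨ y = t := by
    intro x hx y hy hxy
    by_contra! h
    have hxa : G.ReachableIn Sᶜ a x := by simpa [h.1, h.2.1] using hp.1 x hx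
    have hyb : G.ReachableIn Sᶜ b y := by simpa [h.2.2.1, h.2.2.2] using hq.1 y hy
    rcases hxy with rfl | hxy
    · exact hS.prop.not_reachableIn_both hxa hyb
    · exact hS.prop.not_reachableIn_both (hxa.trans_adj hxy hyb.right_mem) hyb
  have hcyc : (p.append q.reverse).IsCycle :=
    hp.isPath.isCycle_append_reverse hq.isPath
      (fun z hzp hzq => by have := hsides z hzp z hzq (.inl rfl); tauto)
      (p.two_le_length_of_not_adj hst hnadj)
  have hcl : (p.append q.reverse).IsChordless :=
    hp.isChordless.append_reverse hq.isChordless fun x hx y hy hxy => hsides x hx y hy (.inr hxy)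
  obtain ⟨x, y, hx, hy, hxy, hn⟩ := hG s _ hcyc (by
    simp only [length_append, length_reverse]
    linarith [p.two_le_length_of_not_adj hst hnadj, q.two_le_length_of_not_adj hst hnadj])
  exact hn (hcl.mem_edges hx hy hxy)

theorem IsChordal.of_embedding {W : Type*} {H : SimpleGraph W} (f : H ↪g G)
    (hG : G.IsChordal) : H.IsChordal := by
  intro v c hc hlen
  obtain ⟨x, y, hx, hy, hxy, hn⟩ :=
    hG _ (c.map f.toHom) (hc.map f.injective) (by simpa using hlen)
  simp only [Walk.support_map, List.mem_map] at hx hy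
  obtain ⟨x, hx, rfl⟩ := hx
  obtain ⟨y, hy, rfl⟩ := hy
  refine ⟨x, y, hx, hy, f.map_adj_iff.mp hxy, fun h => hn ?_⟩
  rw [Walk.edges_map]
  exact List.mem_map_of_mem (f := Sym2.map f) h

theorem IsChordal.induce (hG : G.IsChordal) (U : Set V) : (G.induce U).IsChordal :=
  hG.of_embedding (Embedding.induce U)

lemma IsSimplicial.of_induce {U : Set V} {x : U} (hN : G.neighborSet x ⊆ U)
    (hx : (G.induce U).IsSimplicial x) : G.IsSimplicial x :=
  fun u hu w hw huw => hx (x := ⟨u, hN hu⟩) (y := ⟨w, hN hw⟩) hu hw (by simpa using huw)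

lemma exists_isSimplicial_of_minimal_isSeparator (hS : Minimal (G.IsSeparator · a b) S)
    (hSK : G.IsClique S)
    (ih : ∀ U : Set V, U ≠ Set.univ → ∀ K : Set U, (G.induce U).IsClique K → (∃ v, v ∉ K) →
      ∃ x ∉ K, (G.induce U).IsSimplicial x) :
    ∃ x, G.ReachableIn Sᶜ a x ∧ G.IsSimplicial x := by
  have ⟨ha, hb, hsep⟩ := hS.prop
  set U := S ∪ {z | G.ReachableIn Sᶜ a z}
  have hU : U ≠ Set.univ := (Set.ne_univ_iff_exists_notMem U).mpr
    ⟨b, by rintro (h | h); exacts [hb h, hsep h]⟩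
  obtain ⟨⟨x, hxU⟩, hxS, hx⟩ := ih U hU (Subtype.val ⁻¹' S)
    (isClique_induce_iff.mpr (hSK.subset (Set.image_preimage_subset _ _)))
    ⟨⟨a, .inr (.refl ha)⟩, ha⟩
  have hxa : G.ReachableIn Sᶜ a x := hxU.resolve_left hxS
  refine ⟨x, hxa, hx.of_induce fun y hy => ?_⟩
  by_cases hyS : y ∈ S
  exacts [.inl hyS, .inr (hxa.trans_adj hy hyS)]

universe u

theorem IsChordal.exists_isSimplicial_notMem {V : Type u} [Finite V] {G : SimpleGraph V}
    (hG : G.IsChordal) {K : Set V} (hK : G.IsClique K) (hKV : ∃ v, v ∉ K) :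
    ∃ x ∉ K, G.IsSimplicial x := by
  induction hn : Nat.card V using Nat.strong_induction_on generalizing V with
  | _ n ih =>
  have ih' : ∀ U : Set V, U ≠ Set.univ → ∀ K : Set U, (G.induce U).IsClique K →
      (∃ v, v ∉ K) → ∃ x ∉ K, (G.induce U).IsSimplicial x := fun U hU K hK hKV => by
    obtain ⟨v, hv⟩ := (Set.ne_univ_iff_exists_notMem U).mp hU
    exact ih _ (hn ▸ Finite.card_subtype_lt hv) (hG.induce U) hK hKV rfl
  by_cases hcomplete : ∀ x y : V, x ≠ y → G.Adj x y
  · obtain ⟨v, hv⟩ := hKV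
    exact ⟨v, hv, fun x _ y _ hxy => hcomplete x y hxy⟩
  push Not at hcomplete
  obtain ⟨a, b, hab, hnadj⟩ := hcomplete
  obtain ⟨S, hS⟩ := exists_minimal_isSeparator hab hnadj
  have hSK := hG.isClique_of_minimal_isSeparator hS
  by_cases hKa : ∃ k ∈ K, G.ReachableIn Sᶜ a k
  · obtain ⟨k, hkK, hka⟩ := hKa
    have hS' : Minimal (G.IsSeparator · b a) S := by simpa only [isSeparator_comm] using hS
    obtain ⟨x, hxb, hx⟩ := exists_isSimplicial_of_minimal_isSeparator hS' hSK ih'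
    refine ⟨x, fun hxK => ?_, hx⟩
    have hkx : k ≠ x := by
      rintro rfl
      exact hS.prop.not_reachableIn_both hka hxb
    exact hS.prop.not_reachableIn_both (hka.trans_adj (hK hkK hxK hkx) hxb.right_mem) hxb
  · push Not at hKa
    obtain ⟨x, hxa, hx⟩ := exists_isSimplicial_of_minimal_isSeparator hS hSK ih'
    exact ⟨x, fun hxK => hKa x hxK hxa, hx⟩

lemma IsPerfectEliminationOrder.extend [Finite V] {x : V} (hx : G.IsSimplicial x)
    {f : ({x}ᶜ : Set V) → ℕ} (hf : (G.induce {x}ᶜ).IsPerfectEliminationOrder f) :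
    ∃ g, G.IsPerfectEliminationOrder g := by
  classical
  obtain ⟨M, hM⟩ := (Set.finite_range f).bddAbove
  set g : V → ℕ := fun v => if h : v = x then M + 1 else f ⟨v, h⟩
  have hg : ∀ v (hv : v ≠ x), g v = f ⟨v, hv⟩ := fun v hv => dif_neg hv
  have hlt : ∀ v, v ≠ x → g v < g x := fun v hv => by
    rw [hg v hv, show g x = M + 1 from dif_pos rfl]
    exact Nat.lt_succ_of_le (hM ⟨_, rfl⟩)
  have hne : ∀ {u v}, g u < g v → u ≠ x := fun {u v} huv hux => by
    rw [hux] at huv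
    by_cases hv : v = x
    · rw [hv] at huv
      exact lt_irrefl _ huv
    · exact (hlt v hv).not_gt huv
  refine ⟨g, fun v w hvw => ?_, fun v u w hu hw huw hux hwx => ?_⟩
  · by_cases hv : v = x <;> by_cases hw : w = x
    · rw [hv, hw]
    · exact absurd hvw (hv ▸ (hlt w hw).ne')
    · exact absurd hvw (hw ▸ (hlt v hv).ne)
    · exact congrArg Subtype.val (hf.1 ((hg v hv).symm.trans (hvw.trans (hg w hw))))
  by_cases hv : v = x
  · subst hv
    exact hx hux.symm hwx.symm huw
  · have hu' := hne hu
    have hw' := hne hw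
    rw [hg v hv, hg u hu'] at hu
    rw [hg v hv, hg w hw'] at hw
    exact hf.2 ⟨v, hv⟩ ⟨u, hu'⟩ ⟨w, hw'⟩ hu hw (fun h => huw (congrArg Subtype.val h)) hux hwx

theorem IsChordal.exists_isPerfectEliminationOrder {V : Type u} [Finite V] {G : SimpleGraph V}
    (hG : G.IsChordal) : ∃ f, G.IsPerfectEliminationOrder f := by
  induction hn : Nat.card V using Nat.strong_induction_on generalizing V with
  | _ n ih =>
  cases isEmpty_or_nonempty V
  · exact ⟨fun _ => 0, fun v => isEmptyElim v, fun v => isEmptyElim v⟩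
  obtain ⟨x, -, hx⟩ := hG.exists_isSimplicial_notMem (K := ∅) (by simp) (by simp)
  obtain ⟨f, hf⟩ := ih _ (hn ▸ Finite.card_subtype_lt (x := x) (by simp))
    (hG.induce {x}ᶜ) rfl
  exact hf.extend hx

end SimpleGraph

/-- A finite simple graph admits a perfect elimination ordering (an ordering of the vertices
such that for every vertex `v`, the earlier neighbors of `v` form a clique in the induced
subgraph on vertices `≤ v`) if and only if the graph is chordal. -/
theorem stmt_0 {V : Type*} [Fintype V] (G : SimpleGraph V) :
    (∃ f : V → ℕ, Function.Injective f ∧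
        ∀ v u w : V, f u < f v → f w < f v → u ≠ w → G.Adj u v → G.Adj w v → G.Adj u w)
      ↔ G.IsChordal :=
  ⟨fun ⟨_, hf⟩ => SimpleGraph.IsPerfectEliminationOrder.isChordal hf,
    fun hG => hG.exists_isPerfectEliminationOrder⟩
end

section
/- In a complete Hopf algebra over ℚ, the exponential and logarithm power series converge and define mutually inverse bijections between the set of primitive elements {x : Δx = 1 ⊗̂ x + x ⊗̂ 1} and the set of group-like elements {x : Δx = x ⊗̂ x}. -/
/-- The `n`-th partial sum of the exponential series `Σ xᵏ/k!`. -/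
noncomputable def expPartial {H : Type*} [Ring H] [Algebra ℚ H] (x : H) (n : ℕ) : H :=
  ∑ k ∈ Finset.range n, ((k.factorial : ℚ)⁻¹) • x ^ k

/-- The `n`-th partial sum of the logarithm series `Σ (-1)^(k+1) (y-1)ᵏ / k`. -/
noncomputable def logPartial {H : Type*} [Ring H] [Algebra ℚ H] (y : H) (n : ℕ) : H :=
  ∑ k ∈ Finset.range n, ((-1 : ℚ) ^ (k + 1) * (k : ℚ)⁻¹) • (y - 1) ^ k

structure FilAlg (R : Type*) [Ring R] [Algebra ℚ R] where
  G : ℕ → Submodule ℚ R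
  h0 : G 0 = ⊤
  anti : ∀ n, G (n + 1) ≤ G n
  hmul : ∀ i j, ∀ a ∈ G i, ∀ b ∈ G j, a * b ∈ G (i + j)
  haus : ∀ x : R, (∀ n, x ∈ G n) → x = 0
  compl : ∀ a : ℕ → R, (∀ n, a (n + 1) - a n ∈ G n) → ∃ l : R, ∀ n, l - a n ∈ G n

namespace FilAlg

variable {R : Type*} [Ring R] [Algebra ℚ R] (𝒢 : FilAlg R)

lemma mono {m n : ℕ} (h : m ≤ n) : 𝒢.G n ≤ 𝒢.G m := by
  induction h with
  | refl => exact le_rfl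
  | step h ih => exact le_trans (𝒢.anti _) ih

lemma mem_top (x : R) : x ∈ 𝒢.G 0 := by rw [𝒢.h0]; trivial

lemma mul_right_mem {a : R} {n : ℕ} (ha : a ∈ 𝒢.G n) (b : R) : a * b ∈ 𝒢.G n := by
  simpa using 𝒢.hmul n 0 a ha b (𝒢.mem_top b)

lemma mul_left_mem {a : R} {n : ℕ} (ha : a ∈ 𝒢.G n) (b : R) : b * a ∈ 𝒢.G n := by
  simpa using 𝒢.hmul 0 n b (𝒢.mem_top b) a ha

lemma pow_mem {x : R} (hx : x ∈ 𝒢.G 1) (k : ℕ) : x ^ k ∈ 𝒢.G k := by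
  induction k with
  | zero => exact 𝒢.mem_top _
  | succ k ih => rw [pow_succ]; exact 𝒢.hmul k 1 _ ih x hx

lemma pow_mem_le {x : R} (hx : x ∈ 𝒢.G 1) {n k : ℕ} (h : n ≤ k) : x ^ k ∈ 𝒢.G n :=
  𝒢.mono h (𝒢.pow_mem hx k)

lemma eq_of_sub {a b : R} (h : ∀ n, a - b ∈ 𝒢.G n) : a = b :=
  sub_eq_zero.mp (𝒢.haus _ h)

/-- limits are unique, even comparing two sequences close to each other -/
lemma lim_unique {a b : ℕ → R} {l₁ l₂ : R} (h₁ : ∀ n, l₁ - a n ∈ 𝒢.G n)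
    (h₂ : ∀ n, l₂ - b n ∈ 𝒢.G n) (hab : ∀ n, a n - b n ∈ 𝒢.G n) : l₁ = l₂ := by
  refine 𝒢.eq_of_sub fun n => ?_
  have : l₁ - l₂ = (l₁ - a n) - (l₂ - b n) + (a n - b n) := by noncomm_ring
  rw [this]
  exact add_mem (sub_mem (h₁ n) (h₂ n)) (hab n)

lemma lim_commute {a : ℕ → R} {l c : R} (h : ∀ n, l - a n ∈ 𝒢.G n)
    (hc : ∀ n, Commute c (a n)) : Commute c l := by
  have : c * l - l * c = 0 := by
    refine 𝒢.haus _ fun n => ?_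
    have e : c * l - l * c = c * (l - a n) - (l - a n) * c + (c * a n - a n * c) := by noncomm_ring
    rw [e, (hc n).eq, sub_self, add_zero]
    exact sub_mem (𝒢.mul_left_mem (h n) c) (𝒢.mul_right_mem (h n) c)
  exact sub_eq_zero.mp this

lemma lim_mul {a b : ℕ → R} {l₁ l₂ : R} (h₁ : ∀ n, l₁ - a n ∈ 𝒢.G n)
    (h₂ : ∀ n, l₂ - b n ∈ 𝒢.G n) : ∀ n, l₁ * l₂ - a n * b n ∈ 𝒢.G n := by
  intro n
  have e : l₁ * l₂ - a n * b n = l₁ * (l₂ - b n) + (l₁ - a n) * b n := by noncomm_ring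
  rw [e]
  exact add_mem (𝒢.mul_left_mem (h₂ n) _) (𝒢.mul_right_mem (h₁ n) _)

end FilAlg

namespace FilAlg

variable {R : Type*} [Ring R] [Algebra ℚ R] (𝒢 : FilAlg R)

lemma expPartial_cauchy {x : R} (hx : x ∈ 𝒢.G 1) (n : ℕ) :
    expPartial x (n + 1) - expPartial x n ∈ 𝒢.G n := by
  rw [expPartial, Finset.sum_range_succ, expPartial, add_sub_cancel_left]
  exact Submodule.smul_mem _ _ (𝒢.pow_mem hx n)

lemma logPartial_cauchy {y : R} (hy : y - 1 ∈ 𝒢.G 1) (n : ℕ) :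
    logPartial y (n + 1) - logPartial y n ∈ 𝒢.G n := by
  rw [logPartial, Finset.sum_range_succ, logPartial, add_sub_cancel_left]
  exact Submodule.smul_mem _ _ (𝒢.pow_mem hy n)

end FilAlg

open Classical in
noncomputable def Efun {R : Type*} [Ring R] [Algebra ℚ R] (F : ℕ → Submodule ℚ R) (x : R) : R :=
  if h : ∃ l : R, ∀ n, l - expPartial x n ∈ F n then h.choose else 0

open Classical in
noncomputable def Lfun {R : Type*} [Ring R] [Algebra ℚ R] (F : ℕ → Submodule ℚ R) (y : R) : R :=
  if h : ∃ l : R, ∀ n, l - logPartial y n ∈ F n then h.choose else 0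

namespace FilAlg

variable {R : Type*} [Ring R] [Algebra ℚ R] (𝒢 : FilAlg R)

lemma exp_spec {x : R} (hx : x ∈ 𝒢.G 1) : ∀ n, Efun 𝒢.G x - expPartial x n ∈ 𝒢.G n := by
  have h : ∃ l : R, ∀ n, l - expPartial x n ∈ 𝒢.G n :=
    𝒢.compl _ (𝒢.expPartial_cauchy hx)
  rw [Efun]; rw [dif_pos h]
  exact h.choose_spec

lemma log_spec {y : R} (hy : y - 1 ∈ 𝒢.G 1) : ∀ n, Lfun 𝒢.G y - logPartial y n ∈ 𝒢.G n := by
  have h : ∃ l : R, ∀ n, l - logPartial y n ∈ 𝒢.G n :=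
    𝒢.compl _ (𝒢.logPartial_cauchy hy)
  rw [Lfun]; rw [dif_pos h]
  exact h.choose_spec

lemma expPartial_one (x : R) : expPartial x 1 = 1 := by
  simp [expPartial]

lemma logPartial_one (y : R) : logPartial y 1 = 0 := by
  simp [logPartial]

lemma exp_sub_one {x : R} (hx : x ∈ 𝒢.G 1) : Efun 𝒢.G x - 1 ∈ 𝒢.G 1 := by
  simpa [expPartial_one] using 𝒢.exp_spec hx 1

lemma log_mem {y : R} (hy : y - 1 ∈ 𝒢.G 1) : Lfun 𝒢.G y ∈ 𝒢.G 1 := by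
  simpa [logPartial_one] using 𝒢.log_spec hy 1

/-- perturbing the base of a power by something in `G N` changes it by something in `G N` -/
lemma pow_perturb (p : R) {c : R} {N : ℕ} (hc : c ∈ 𝒢.G N) (k : ℕ) :
    (p + c) ^ k - p ^ k ∈ 𝒢.G N := by
  induction k with
  | zero => simpa using Submodule.zero_mem _
  | succ k ih =>
    have e : (p + c) ^ (k + 1) - p ^ (k + 1)
        = ((p + c) ^ k - p ^ k) * p + (p + c) ^ k * c := by
      rw [pow_succ, pow_succ]; noncomm_ring
    rw [e]
    exact add_mem (𝒢.mul_right_mem ih p) (𝒢.mul_left_mem hc _)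

lemma logPartial_perturb {y y' : R} {N : ℕ} (h : y' - y ∈ 𝒢.G N) (n : ℕ) :
    logPartial y' n - logPartial y n ∈ 𝒢.G N := by
  rw [logPartial, logPartial, ← Finset.sum_sub_distrib]
  refine Submodule.sum_mem _ fun k _ => ?_
  rw [← smul_sub]
  refine Submodule.smul_mem _ _ ?_
  have e : y' - 1 = (y - 1) + (y' - y) := by noncomm_ring
  rw [e]
  exact 𝒢.pow_perturb (y - 1) h k

end FilAlg

namespace FilAlg

variable {R : Type*} [Ring R] [Algebra ℚ R] (𝒢 : FilAlg R)

/-- expPartial of a sum of commuting elements vs product, mod `G n` -/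
lemma expPartial_add_sub {a b : R} (ha : a ∈ 𝒢.G 1) (hb : b ∈ 𝒢.G 1)
    (hab : Commute a b) (n : ℕ) :
    expPartial (a + b) n - expPartial a n * expPartial b n ∈ 𝒢.G n := by
  classical
  set f : ℕ × ℕ → R := fun p =>
    ((p.1.factorial : ℚ)⁻¹ * ((p.2.factorial : ℚ))⁻¹) • (a ^ p.1 * b ^ p.2) with hf
  have hsq : expPartial a n * expPartial b n
      = ∑ p ∈ Finset.range n ×ˢ Finset.range n, f p := by
    rw [expPartial, expPartial, Finset.sum_mul_sum, Finset.sum_product]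
    exact Finset.sum_congr rfl fun i _ => Finset.sum_congr rfl fun j _ =>
      smul_mul_smul_comm _ _ _ _
  have htri : expPartial (a + b) n
      = ∑ p ∈ (Finset.range n ×ˢ Finset.range n).filter (fun p => p.1 + p.2 < n), f p := by
    have e1 : ∀ k, ((k.factorial : ℚ)⁻¹) • (a + b) ^ k
        = ∑ i ∈ Finset.range (k + 1), f (i, k - i) := by
      intro k
      rw [hab.add_pow, Finset.smul_sum]
      refine Finset.sum_congr rfl fun i hi => ?_
      have hik : i ≤ k := Nat.lt_succ_iff.mp (Finset.mem_range.mp hi)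
      have hcoeff : ((k.factorial : ℚ))⁻¹ * ((k.choose i : ℕ) : ℚ) =
          ((i.factorial : ℚ))⁻¹ * ((((k - i).factorial : ℕ)) : ℚ)⁻¹ := by
        rw [Nat.cast_choose ℚ hik]
        have h1 : ((i.factorial : ℕ) : ℚ) ≠ 0 := by exact_mod_cast i.factorial_ne_zero
        have h2 : (((k - i).factorial : ℕ) : ℚ) ≠ 0 := by
          exact_mod_cast (k - i).factorial_ne_zero
        have h3 : ((k.factorial : ℕ) : ℚ) ≠ 0 := by exact_mod_cast k.factorial_ne_zero
        field_simp
      calc ((k.factorial : ℚ))⁻¹ • (a ^ i * b ^ (k - i) * ((k.choose i : ℕ) : R))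
          = ((k.factorial : ℚ))⁻¹ • (((k.choose i : ℕ) : R) * (a ^ i * b ^ (k - i))) := by
            rw [(Nat.cast_commute (k.choose i) (a ^ i * b ^ (k - i))).eq]
        _ = ((k.factorial : ℚ))⁻¹ • ((k.choose i : ℕ) • (a ^ i * b ^ (k - i))) := by
            rw [nsmul_eq_mul]
        _ = ((k.factorial : ℚ))⁻¹ • ((((k.choose i : ℕ) : ℚ)) • (a ^ i * b ^ (k - i))) := by
            rw [Nat.cast_smul_eq_nsmul]
        _ = f (i, k - i) := by rw [smul_smul, hcoeff, hf]
    rw [expPartial]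
    simp_rw [e1]
    rw [Finset.sum_sigma']
    refine Finset.sum_nbij' (fun x => (x.2, x.1 - x.2)) (fun p => ⟨p.1 + p.2, p.1⟩)
      ?_ ?_ ?_ ?_ ?_
    · rintro ⟨k, i⟩ hx
      simp only [Finset.mem_sigma, Finset.mem_range, Nat.lt_succ_iff] at hx
      obtain ⟨hk, hik⟩ := hx
      simp only [Finset.mem_filter, Finset.mem_product, Finset.mem_range]
      omega
    · rintro ⟨i, j⟩ hp
      simp only [Finset.mem_filter, Finset.mem_product, Finset.mem_range] at hp
      simp only [Finset.mem_sigma, Finset.mem_range, Nat.lt_succ_iff]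
      omega
    · rintro ⟨k, i⟩ hx
      simp only [Finset.mem_sigma, Finset.mem_range, Nat.lt_succ_iff] at hx
      have : i + (k - i) = k := by omega
      simp [this]
    · rintro ⟨i, j⟩ hp
      simp
    · rintro ⟨k, i⟩ _
      rfl
  have hsplit := Finset.sum_filter_add_sum_filter_not
    (Finset.range n ×ˢ Finset.range n) (fun p => p.1 + p.2 < n) f
  have : expPartial (a + b) n - expPartial a n * expPartial b n
      = -∑ p ∈ (Finset.range n ×ˢ Finset.range n).filter (fun p => ¬ p.1 + p.2 < n), f p := by
    rw [htri, hsq, ← hsplit]; noncomm_ring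
  rw [this]
  refine neg_mem (Submodule.sum_mem _ fun p hp => ?_)
  simp only [Finset.mem_filter, Finset.mem_product, Finset.mem_range, not_lt] at hp
  refine Submodule.smul_mem _ _ (𝒢.mono hp.2 ?_)
  simpa using 𝒢.hmul p.1 p.2 _ (𝒢.pow_mem ha p.1) _ (𝒢.pow_mem hb p.2)

end FilAlg

namespace FilAlg

variable {R : Type*} [Ring R] [Algebra ℚ R] (𝒢 : FilAlg R)

lemma commute_expPartial {c x : R} (h : Commute c x) (n : ℕ) :
    Commute c (expPartial x n) :=
  Commute.sum_right _ _ _ fun k _ => ((h.pow_right k).smul_right _)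

lemma commute_logPartial {c y : R} (h : Commute c y) (n : ℕ) :
    Commute c (logPartial y n) :=
  Commute.sum_right _ _ _ fun k _ =>
    (((h.sub_right (Commute.one_right c)).pow_right k).smul_right _)

lemma commute_exp {c x : R} (hx : x ∈ 𝒢.G 1) (h : Commute c x) :
    Commute c (Efun 𝒢.G x) :=
  𝒢.lim_commute (𝒢.exp_spec hx) fun n => commute_expPartial h n

lemma commute_log {c y : R} (hy : y - 1 ∈ 𝒢.G 1) (h : Commute c y) :
    Commute c (Lfun 𝒢.G y) :=
  𝒢.lim_commute (𝒢.log_spec hy) fun n => commute_logPartial h n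

lemma exp_add {a b : R} (ha : a ∈ 𝒢.G 1) (hb : b ∈ 𝒢.G 1) (hab : Commute a b) :
    Efun 𝒢.G (a + b) = Efun 𝒢.G a * Efun 𝒢.G b := by
  refine 𝒢.lim_unique (𝒢.exp_spec (add_mem ha hb))
    (𝒢.lim_mul (𝒢.exp_spec ha) (𝒢.exp_spec hb))
    fun n => 𝒢.expPartial_add_sub ha hb hab n

/-- the key inequality for injectivity of exp -/
lemma exp_sub_exp {a b : R} (ha : a ∈ 𝒢.G 1) (hb : b ∈ 𝒢.G 1) (hab : Commute a b)
    {m : ℕ} (hm : 1 ≤ m) (h : a - b ∈ 𝒢.G m) :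
    (Efun 𝒢.G a - Efun 𝒢.G b) - (a - b) ∈ 𝒢.G (m + 1) := by
  have key : ∀ k, k ≠ 1 → ((k.factorial : ℚ))⁻¹ • (a ^ k - b ^ k) ∈ 𝒢.G (m + 1) := by
    intro k hk
    match k, hk with
    | 0, _ => simpa using Submodule.zero_mem _
    | (k+2), _ =>
      refine Submodule.smul_mem _ _ ?_
      rw [← hab.geom_sum₂_mul (k + 2)]
      have hgeom : (∑ i ∈ Finset.range (k + 2), a ^ i * b ^ (k + 2 - 1 - i)) ∈ 𝒢.G (k + 1) := by
        refine Submodule.sum_mem _ fun i hi => ?_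
        have hi' : i ≤ k + 1 := Nat.lt_succ_iff.mp (Finset.mem_range.mp hi)
        have : i + (k + 2 - 1 - i) = k + 1 := by omega
        have := 𝒢.hmul i (k + 2 - 1 - i) _ (𝒢.pow_mem ha i) _ (𝒢.pow_mem hb _)
        rwa [‹i + (k + 2 - 1 - i) = k + 1›] at this
      have := 𝒢.hmul (k + 1) m _ hgeom _ h
      exact 𝒢.mono (by omega) this
  have e : (Efun 𝒢.G a - Efun 𝒢.G b) - (a - b)
      = (Efun 𝒢.G a - expPartial a (m + 2)) - (Efun 𝒢.G b - expPartial b (m + 2))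
        + ((expPartial a (m + 2) - expPartial b (m + 2)) - (a - b)) := by noncomm_ring
  rw [e]
  refine add_mem (sub_mem (𝒢.mono (by omega) (𝒢.exp_spec ha (m + 2)))
    (𝒢.mono (by omega) (𝒢.exp_spec hb (m + 2)))) ?_
  have e2 : expPartial a (m + 2) - expPartial b (m + 2)
      = ∑ k ∈ Finset.range (m + 2), ((k.factorial : ℚ))⁻¹ • (a ^ k - b ^ k) := by
    rw [expPartial, expPartial, ← Finset.sum_sub_distrib]
    exact Finset.sum_congr rfl fun k _ => (smul_sub _ _ _).symm
  rw [e2]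
  have h1mem : (1 : ℕ) ∈ Finset.range (m + 2) := Finset.mem_range.mpr (by omega)
  rw [← Finset.add_sum_erase _ _ h1mem]
  have hf1 : ((Nat.factorial 1 : ℚ))⁻¹ • (a ^ 1 - b ^ 1) = a - b := by
    simp [Nat.factorial]
  rw [hf1, add_sub_cancel_left]
  exact Submodule.sum_mem _ fun k hk => key k (Finset.ne_of_mem_erase hk)

end FilAlg

namespace FilAlg

variable {R : Type*} [Ring R] [Algebra ℚ R] (𝒢 : FilAlg R)

/-- the key inequality for injectivity of log -/
lemma log_sub_log {v w : R} (hv : v - 1 ∈ 𝒢.G 1) (hw : w - 1 ∈ 𝒢.G 1) (hvw : Commute v w)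
    {m : ℕ} (hm : 1 ≤ m) (h : v - w ∈ 𝒢.G m) :
    (Lfun 𝒢.G v - Lfun 𝒢.G w) - (v - w) ∈ 𝒢.G (m + 1) := by
  have hc : Commute (v - 1) (w - 1) :=
    (hvw.sub_right (Commute.one_right v)).sub_left (Commute.one_left (w - 1))
  have hsub : (v - 1) - (w - 1) = v - w := by noncomm_ring
  have key : ∀ k : ℕ, k ≠ 1 → ((-1 : ℚ) ^ (k + 1) * (k : ℚ)⁻¹) • ((v - 1) ^ k - (w - 1) ^ k)
      ∈ 𝒢.G (m + 1) := by
    intro k hk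
    match k, hk with
    | 0, _ => simpa using Submodule.zero_mem _
    | (k+2), _ =>
      refine Submodule.smul_mem _ _ ?_
      rw [← hc.geom_sum₂_mul (k + 2), hsub]
      have hgeom : (∑ i ∈ Finset.range (k + 2), (v - 1) ^ i * (w - 1) ^ (k + 2 - 1 - i))
          ∈ 𝒢.G (k + 1) := by
        refine Submodule.sum_mem _ fun i hi => ?_
        have hi' : i ≤ k + 1 := Nat.lt_succ_iff.mp (Finset.mem_range.mp hi)
        have he : i + (k + 2 - 1 - i) = k + 1 := by omega
        have := 𝒢.hmul i (k + 2 - 1 - i) _ (𝒢.pow_mem hv i) _ (𝒢.pow_mem hw _)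
        rwa [he] at this
      have := 𝒢.hmul (k + 1) m _ hgeom _ h
      exact 𝒢.mono (by omega) this
  have e : (Lfun 𝒢.G v - Lfun 𝒢.G w) - (v - w)
      = (Lfun 𝒢.G v - logPartial v (m + 2)) - (Lfun 𝒢.G w - logPartial w (m + 2))
        + ((logPartial v (m + 2) - logPartial w (m + 2)) - (v - w)) := by noncomm_ring
  rw [e]
  refine add_mem (sub_mem (𝒢.mono (by omega) (𝒢.log_spec hv (m + 2)))
    (𝒢.mono (by omega) (𝒢.log_spec hw (m + 2)))) ?_
  have e2 : logPartial v (m + 2) - logPartial w (m + 2)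
      = ∑ k ∈ Finset.range (m + 2),
          ((-1 : ℚ) ^ (k + 1) * (k : ℚ)⁻¹) • ((v - 1) ^ k - (w - 1) ^ k) := by
    rw [logPartial, logPartial, ← Finset.sum_sub_distrib]
    exact Finset.sum_congr rfl fun k _ => (smul_sub _ _ _).symm
  rw [e2]
  have h1mem : (1 : ℕ) ∈ Finset.range (m + 2) := Finset.mem_range.mpr (by omega)
  rw [← Finset.add_sum_erase _ _ h1mem]
  have hf1 : ((-1 : ℚ) ^ (1 + 1) * ((1 : ℕ) : ℚ)⁻¹) • ((v - 1) ^ 1 - (w - 1) ^ 1) = v - w := by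
    simp [hsub]
  rw [hf1, add_sub_cancel_left]
  exact Submodule.sum_mem _ fun k hk => key k (Finset.ne_of_mem_erase hk)

lemma exp_inj {a b : R} (ha : a ∈ 𝒢.G 1) (hb : b ∈ 𝒢.G 1) (hab : Commute a b)
    (h : Efun 𝒢.G a = Efun 𝒢.G b) : a = b := by
  refine 𝒢.eq_of_sub fun n => ?_
  induction n with
  | zero => exact 𝒢.mem_top _
  | succ n ih =>
    match n, ih with
    | 0, _ => exact sub_mem ha hb
    | (n+1), ih =>
      have := 𝒢.exp_sub_exp ha hb hab (Nat.succ_le_succ (Nat.zero_le n)) ih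
      rw [h, sub_self, zero_sub] at this
      simpa using neg_mem this

lemma log_inj {v w : R} (hv : v - 1 ∈ 𝒢.G 1) (hw : w - 1 ∈ 𝒢.G 1) (hvw : Commute v w)
    (h : Lfun 𝒢.G v = Lfun 𝒢.G w) : v = w := by
  refine 𝒢.eq_of_sub fun n => ?_
  induction n with
  | zero => exact 𝒢.mem_top _
  | succ n ih =>
    match n, ih with
    | 0, _ => by_cases h' : True
              · have := sub_mem hv hw
                simpa using this
              · exact absurd trivial h'
    | (n+1), ih =>
      have := 𝒢.log_sub_log hv hw hvw (Nat.succ_le_succ (Nat.zero_le n)) ih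
      rw [h, sub_self, zero_sub] at this
      simpa using neg_mem this

end FilAlg
open Polynomial

noncomputable def expPoly (n : ℕ) : Polynomial ℚ :=
  ∑ k ∈ Finset.range n, C ((k.factorial : ℚ)⁻¹) * X ^ k

noncomputable def logPoly (n : ℕ) : Polynomial ℚ :=
  ∑ k ∈ Finset.range n, C ((-1 : ℚ) ^ (k + 1) * (k : ℚ)⁻¹) * (X - 1) ^ k

lemma derivative_logPoly (n : ℕ) :
    derivative (logPoly (n + 1)) = ∑ j ∈ Finset.range n, (1 - X) ^ j := by
  rw [logPoly, derivative_sum, Finset.sum_range_succ']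
  have h0 : derivative (C ((-1 : ℚ) ^ (0 + 1) * ((0 : ℕ) : ℚ)⁻¹) * (X - 1) ^ 0) = 0 := by
    simp
  rw [h0, add_zero]
  refine Finset.sum_congr rfl fun j _ => ?_
  have hd : derivative (X - 1 : ℚ[X]) = 1 := by simp
  rw [derivative_mul, derivative_C, zero_mul, zero_add, derivative_pow, hd, mul_one,
    Nat.add_sub_cancel, ← mul_assoc]
  have hcast : (((j : ℚ[X])) + 1) = C (((j + 1 : ℕ) : ℚ)) := by push_cast; simp
  have step1 : (C ((-1 : ℚ) ^ (j + 1 + 1) * ((j + 1 : ℕ) : ℚ)⁻¹)) * C (((j + 1 : ℕ) : ℚ))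
      = C ((-1 : ℚ) ^ j) := by
    have hne : ((j + 1 : ℕ) : ℚ) ≠ 0 := Nat.cast_ne_zero.mpr (Nat.succ_ne_zero j)
    rw [← map_mul]
    congr 1
    field_simp
    rw [pow_succ, pow_succ]
    ring
  rw [step1]
  have : (C ((-1 : ℚ) ^ j) : ℚ[X]) = (-1 : ℚ[X]) ^ j := by
    rw [map_pow, map_neg, map_one]
  rw [this, ← neg_pow]
  congr 1
  ring

lemma X_mul_derivative_logPoly (n : ℕ) :
    X * derivative (logPoly (n + 1)) = 1 - (1 - X) ^ n := by
  rw [derivative_logPoly]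
  have h := geom_sum_mul (1 - X : ℚ[X]) n
  linear_combination -h

lemma derivative_expPoly (n : ℕ) :
    derivative (expPoly (n + 1)) = expPoly n := by
  rw [expPoly, derivative_sum, Finset.sum_range_succ']
  have h0 : derivative (C ((Nat.factorial 0 : ℚ)⁻¹) * X ^ 0) = 0 := by simp
  rw [h0, add_zero, expPoly]
  refine Finset.sum_congr rfl fun j _ => ?_
  rw [derivative_mul, derivative_C, zero_mul, zero_add, derivative_X_pow, Nat.add_sub_cancel,
    ← mul_assoc]
  congr 1
  rw [mul_comm, ← map_mul]
  congr 1
  rw [Nat.factorial_succ]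
  have h1 : ((j + 1 : ℕ) : ℚ) ≠ 0 := Nat.cast_ne_zero.mpr (Nat.succ_ne_zero j)
  have h2 : ((j.factorial : ℕ) : ℚ) ≠ 0 := Nat.cast_ne_zero.mpr j.factorial_ne_zero
  push_cast
  field_simp

lemma expPoly_succ (n : ℕ) :
    expPoly (n + 1) = expPoly n + C ((n.factorial : ℚ)⁻¹) * X ^ n := by
  rw [expPoly, Finset.sum_range_succ, expPoly]

lemma eval_expPoly_zero (n : ℕ) : (expPoly (n + 1)).eval 0 = 1 := by
  rw [expPoly, eval_finset_sum, Finset.sum_eq_single 0]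
  · simp
  · intro k _ hk
    simp [zero_pow hk]
  · intro h
    exact absurd (Finset.mem_range.mpr (Nat.succ_pos n)) h

lemma X_dvd_one_sub_expPoly (n : ℕ) : X ∣ (1 - expPoly (n + 1)) := by
  rw [X_dvd_iff, coeff_zero_eq_eval_zero, eval_sub, eval_one, eval_expPoly_zero, sub_self]

lemma eval_logPoly_one (n : ℕ) : (logPoly n).eval 1 = 0 := by
  rw [logPoly, eval_finset_sum]
  refine Finset.sum_eq_zero fun k _ => ?_
  rcases Nat.eq_zero_or_pos k with hk | hk
  · subst hk; simp
  · simp [zero_pow (Nat.pos_iff_ne_zero.mp hk)]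

lemma X_pow_dvd_derivative_comp (n : ℕ) :
    (X : ℚ[X]) ^ n ∣ derivative ((logPoly (n + 1)).comp (expPoly (n + 1)) - X) := by
  set e := expPoly (n + 1) with he
  rw [derivative_sub, derivative_X, derivative_comp]
  have key : derivative e * (derivative (logPoly (n + 1))).comp e - 1
      = -((1 - e) ^ n) - C ((n.factorial : ℚ)⁻¹) * X ^ n * (derivative (logPoly (n + 1))).comp e := by
    have h1 : derivative e = e - C ((n.factorial : ℚ)⁻¹) * X ^ n := by
      rw [he, derivative_expPoly, expPoly_succ]; ring
    have h2 : e * (derivative (logPoly (n + 1))).comp e = 1 - (1 - e) ^ n := by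
      have := congrArg (fun p => p.comp e) (X_mul_derivative_logPoly n)
      simpa [mul_comp, X_comp, sub_comp, one_comp, pow_comp] using this
    rw [h1]
    rw [sub_mul, h2]
    ring
  rw [key]
  refine dvd_sub (dvd_neg.mpr (pow_dvd_pow_of_dvd (X_dvd_one_sub_expPoly n) n)) ?_
  exact Dvd.dvd.mul_right (Dvd.dvd.mul_left (dvd_refl _) _) _

lemma logPoly_comp_expPoly_coeff {n k : ℕ} (hk : k < n) :
    ((logPoly n).comp (expPoly n) - X).coeff k = 0 := by
  obtain ⟨m, rfl⟩ : ∃ m, n = m + 1 := ⟨n - 1, by omega⟩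
  set P := (logPoly (m + 1)).comp (expPoly (m + 1)) - X with hP
  rcases Nat.eq_zero_or_pos k with hk0 | hkpos
  · subst hk0
    rw [coeff_zero_eq_eval_zero, hP, eval_sub, eval_X, eval_comp, eval_expPoly_zero,
      eval_logPoly_one]
    simp
  · obtain ⟨q, hq⟩ := X_pow_dvd_derivative_comp m
    have hc : (derivative P).coeff (k - 1) = 0 := by
      rw [hq, mul_comm, coeff_mul_X_pow']
      have : ¬ m ≤ k - 1 := by omega
      rw [if_neg this]
    rw [coeff_derivative] at hc
    have hk1 : k - 1 + 1 = k := by omega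
    rw [hk1] at hc
    have hne : ((k - 1 : ℕ) : ℚ) + 1 ≠ 0 := by positivity
    exact (mul_eq_zero.mp hc).resolve_right hne

section Aeval

variable {R : Type*} [Ring R] [Algebra ℚ R]

lemma aeval_expPoly (x : R) (n : ℕ) :
    Polynomial.aeval x (expPoly n) = expPartial x n := by
  rw [expPoly, expPartial, map_sum]
  refine Finset.sum_congr rfl fun k _ => ?_
  rw [map_mul, Polynomial.aeval_C, map_pow, Polynomial.aeval_X, Algebra.smul_def]

lemma aeval_logPoly (y : R) (n : ℕ) :
    Polynomial.aeval y (logPoly n) = logPartial y n := by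
  rw [logPoly, logPartial, map_sum]
  refine Finset.sum_congr rfl fun k _ => ?_
  rw [map_mul, Polynomial.aeval_C, map_pow, map_sub, Polynomial.aeval_X, map_one,
    Algebra.smul_def]

lemma FilAlg.aeval_mem (𝒢 : FilAlg R) {x : R} (hx : x ∈ 𝒢.G 1) {n : ℕ} {p : Polynomial ℚ}
    (hp : ∀ k < n, p.coeff k = 0) : Polynomial.aeval x p ∈ 𝒢.G n := by
  rw [Polynomial.aeval_eq_sum_range]
  refine Submodule.sum_mem _ fun k _ => ?_
  by_cases hk : k < n
  · rw [hp k hk, zero_smul]; exact Submodule.zero_mem _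
  · exact Submodule.smul_mem _ _ (𝒢.pow_mem_le hx (not_lt.mp hk))

end Aeval

namespace FilAlg

variable {R : Type*} [Ring R] [Algebra ℚ R] (𝒢 : FilAlg R)

lemma log_exp {x : R} (hx : x ∈ 𝒢.G 1) : Lfun 𝒢.G (Efun 𝒢.G x) = x := by
  refine 𝒢.eq_of_sub fun n => ?_
  have e : Lfun 𝒢.G (Efun 𝒢.G x) - x
      = (Lfun 𝒢.G (Efun 𝒢.G x) - logPartial (Efun 𝒢.G x) n)
        + (logPartial (Efun 𝒢.G x) n - logPartial (expPartial x n) n)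
        + (logPartial (expPartial x n) n - x) := by noncomm_ring
  rw [e]
  refine add_mem (add_mem (𝒢.log_spec (𝒢.exp_sub_one hx) n) ?_) ?_
  · exact 𝒢.logPartial_perturb (𝒢.exp_spec hx n) n
  · have : logPartial (expPartial x n) n - x
        = Polynomial.aeval x ((logPoly n).comp (expPoly n) - Polynomial.X) := by
      rw [map_sub, Polynomial.aeval_X, Polynomial.aeval_comp, aeval_expPoly, aeval_logPoly]
    rw [this]
    exact 𝒢.aeval_mem hx fun k hk => logPoly_comp_expPoly_coeff hk

lemma exp_log {y : R} (hy : y - 1 ∈ 𝒢.G 1) : Efun 𝒢.G (Lfun 𝒢.G y) = y := by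
  have hLy : Lfun 𝒢.G y ∈ 𝒢.G 1 := 𝒢.log_mem hy
  have hyy : Commute y (Lfun 𝒢.G y) := 𝒢.commute_log hy (Commute.refl y)
  have hyE : Commute y (Efun 𝒢.G (Lfun 𝒢.G y)) := 𝒢.commute_exp hLy hyy
  refine 𝒢.log_inj (𝒢.exp_sub_one hLy) hy hyE.symm ?_
  rw [𝒢.log_exp hLy]

lemma log_mul {u v : R} (hu : u - 1 ∈ 𝒢.G 1) (hv : v - 1 ∈ 𝒢.G 1) (huv : Commute u v) :
    Lfun 𝒢.G (u * v) = Lfun 𝒢.G u + Lfun 𝒢.G v := by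
  have huv1 : u * v - 1 ∈ 𝒢.G 1 := by
    have e : u * v - 1 = (u - 1) * v + (v - 1) := by noncomm_ring
    rw [e]
    exact add_mem (𝒢.mul_right_mem hu v) hv
  have hLu : Lfun 𝒢.G u ∈ 𝒢.G 1 := 𝒢.log_mem hu
  have hLv : Lfun 𝒢.G v ∈ 𝒢.G 1 := 𝒢.log_mem hv
  have hcLuLv : Commute (Lfun 𝒢.G u) (Lfun 𝒢.G v) :=
    𝒢.commute_log hv (𝒢.commute_log hu huv.symm).symm
  -- E (L u + L v) = u * v
  have hE : Efun 𝒢.G (Lfun 𝒢.G u + Lfun 𝒢.G v) = u * v := by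
    rw [𝒢.exp_add hLu hLv hcLuLv, 𝒢.exp_log hu, 𝒢.exp_log hv]
  -- commutation of the two candidates
  have hcuuv : Commute u (u * v) := (Commute.refl u).mul_right huv
  have hcvuv : Commute v (u * v) := huv.symm.mul_right (Commute.refl v)
  have hcomm2 : Commute (Lfun 𝒢.G (u * v)) (Lfun 𝒢.G u + Lfun 𝒢.G v) := by
    have h1 : Commute (Lfun 𝒢.G (u * v)) (Lfun 𝒢.G u) :=
      𝒢.commute_log hu (𝒢.commute_log huv1 hcuuv).symm
    have h2 : Commute (Lfun 𝒢.G (u * v)) (Lfun 𝒢.G v) :=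
      𝒢.commute_log hv (𝒢.commute_log huv1 hcvuv).symm
    exact h1.add_right h2
  refine 𝒢.exp_inj (𝒢.log_mem huv1) (add_mem hLu hLv) hcomm2 ?_
  rw [𝒢.exp_log huv1, hE]

end FilAlg

section Hom

variable {R S : Type*} [Ring R] [Algebra ℚ R] [Ring S] [Algebra ℚ S]

lemma hom_expPartial (f : R →ₐ[ℚ] S) (x : R) (n : ℕ) :
    f (expPartial x n) = expPartial (f x) n := by
  rw [expPartial, expPartial, map_sum]
  exact Finset.sum_congr rfl fun k _ => by rw [map_smul, map_pow]

lemma hom_logPartial (f : R →ₐ[ℚ] S) (y : R) (n : ℕ) :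
    f (logPartial y n) = logPartial (f y) n := by
  rw [logPartial, logPartial, map_sum]
  exact Finset.sum_congr rfl fun k _ => by rw [map_smul, map_pow, map_sub, map_one]

lemma hom_exp (𝒢 : FilAlg R) (𝒣 : FilAlg S) (f : R →ₐ[ℚ] S)
    (hf : ∀ n, ∀ x ∈ 𝒢.G n, f x ∈ 𝒣.G n) {x : R} (hx : x ∈ 𝒢.G 1) :
    f (Efun 𝒢.G x) = Efun 𝒣.G (f x) := by
  refine 𝒣.lim_unique (a := fun n => expPartial (f x) n) (b := fun n => expPartial (f x) n)
    (fun n => ?_) (𝒣.exp_spec (hf 1 x hx)) (fun n => by simpa using Submodule.zero_mem _)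
  show f (Efun 𝒢.G x) - expPartial (f x) n ∈ 𝒣.G n
  rw [← hom_expPartial f x n, ← map_sub]
  exact hf n _ (𝒢.exp_spec hx n)

lemma hom_log (𝒢 : FilAlg R) (𝒣 : FilAlg S) (f : R →ₐ[ℚ] S)
    (hf : ∀ n, ∀ x ∈ 𝒢.G n, f x ∈ 𝒣.G n) {y : R} (hy : y - 1 ∈ 𝒢.G 1) :
    f (Lfun 𝒢.G y) = Lfun 𝒣.G (f y) := by
  have hfy : f y - 1 ∈ 𝒣.G 1 := by
    have := hf 1 _ hy
    rwa [map_sub, map_one] at this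
  refine 𝒣.lim_unique (a := fun n => logPartial (f y) n) (b := fun n => logPartial (f y) n)
    (fun n => ?_) (𝒣.log_spec hfy) (fun n => by simpa using Submodule.zero_mem _)
  show f (Lfun 𝒢.G y) - logPartial (f y) n ∈ 𝒣.G n
  rw [← hom_logPartial f y n, ← map_sub]
  exact hf n _ (𝒢.log_spec hy n)

end Hom

/-- In a complete Hopf algebra over `ℚ` — presented here by a complete, Hausdorff,
multiplicative filtration `F` on `H`, a comultiplication `Δ : H → T` into a complete filtered
model `T` of the completed tensor square `H ⊗̂ H` (with the two commuting coface inclusions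
`i₁ x = x ⊗̂ 1`, `i₂ x = 1 ⊗̂ x`), and a counit `ε` whose augmentation ideal is contained in
`F 1` — the exponential and logarithm series converge and define mutually inverse bijections
between the set of primitive elements `{x : Δx = x ⊗̂ 1 + 1 ⊗̂ x}` and the set of group-like
elements `{x : Δx = x ⊗̂ x}`. -/
theorem stmt_14 {H : Type*} [Ring H] [Algebra ℚ H] (F : ℕ → Submodule ℚ H)
    (hF0 : F 0 = ⊤) (hFanti : ∀ n, F (n + 1) ≤ F n)
    (hFmul : ∀ i j, ∀ a ∈ F i, ∀ b ∈ F j, a * b ∈ F (i + j))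
    (hFhaus : ∀ x : H, (∀ n, x ∈ F n) → x = 0)
    (hFcomplete : ∀ a : ℕ → H, (∀ n, a (n + 1) - a n ∈ F n) → ∃ l : H, ∀ n, l - a n ∈ F n)
    {T : Type*} [Ring T] [Algebra ℚ T] (F' : ℕ → Submodule ℚ T)
    (hF'0 : F' 0 = ⊤) (hF'anti : ∀ n, F' (n + 1) ≤ F' n)
    (hF'mul : ∀ i j, ∀ a ∈ F' i, ∀ b ∈ F' j, a * b ∈ F' (i + j))
    (hF'haus : ∀ x : T, (∀ n, x ∈ F' n) → x = 0)
    (hF'complete : ∀ a : ℕ → T, (∀ n, a (n + 1) - a n ∈ F' n) → ∃ l : T, ∀ n, l - a n ∈ F' n)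
    (Δ : H →ₐ[ℚ] T) (hΔ : ∀ n, ∀ x ∈ F n, Δ x ∈ F' n)
    (i1 i2 : H →ₐ[ℚ] T)
    (hi1 : ∀ n, ∀ x ∈ F n, i1 x ∈ F' n) (hi2 : ∀ n, ∀ x ∈ F n, i2 x ∈ F' n)
    (hcomm : ∀ a b : H, i1 a * i2 b = i2 b * i1 a)
    (ε : H →ₐ[ℚ] ℚ) (hεF : ∀ x : H, ε x = 0 ↔ x ∈ F 1) :
    ∃ E L : H → H,
      (∀ x : H, Δ x = i1 x + i2 x → ε x = 0 →
        (∀ n, E x - expPartial x n ∈ F n) ∧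
          Δ (E x) = i1 (E x) * i2 (E x) ∧ ε (E x) = 1) ∧
      (∀ y : H, Δ y = i1 y * i2 y → ε y = 1 →
        (∀ n, L y - logPartial y n ∈ F n) ∧
          Δ (L y) = i1 (L y) + i2 (L y) ∧ ε (L y) = 0) ∧
      (∀ x : H, Δ x = i1 x + i2 x → ε x = 0 → L (E x) = x) ∧
      (∀ y : H, Δ y = i1 y * i2 y → ε y = 1 → E (L y) = y) := by
  set 𝒢 : FilAlg H := ⟨F, hF0, hFanti, hFmul, hFhaus, hFcomplete⟩ with h𝒢
  set 𝒣 : FilAlg T := ⟨F', hF'0, hF'anti, hF'mul, hF'haus, hF'complete⟩ with h𝒣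
  refine ⟨Efun F, Lfun F, ?_, ?_, ?_, ?_⟩
  · -- exp of primitives
    intro x hprim hε
    have hx : x ∈ 𝒢.G 1 := (hεF x).mp hε
    refine ⟨𝒢.exp_spec hx, ?_, ?_⟩
    · have h1 : Δ (Efun F x) = Efun F' (Δ x) := hom_exp 𝒢 𝒣 Δ hΔ hx
      have h2 : i1 (Efun F x) = Efun F' (i1 x) := hom_exp 𝒢 𝒣 i1 hi1 hx
      have h3 : i2 (Efun F x) = Efun F' (i2 x) := hom_exp 𝒢 𝒣 i2 hi2 hx
      rw [h1, h2, h3, hprim]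
      exact 𝒣.exp_add (hi1 1 x hx) (hi2 1 x hx) (hcomm x x)
    · have := 𝒢.exp_sub_one hx
      have h0 : ε (Efun F x - 1) = 0 := (hεF _).mpr this
      rw [map_sub, map_one, sub_eq_zero] at h0
      exact h0
  · -- log of group-likes
    intro y hgrp hε
    have hy : y - 1 ∈ 𝒢.G 1 := by
      refine (hεF _).mp ?_
      rw [map_sub, map_one, hε, sub_self]
    refine ⟨𝒢.log_spec hy, ?_, ?_⟩
    · have hi1y : i1 y - 1 ∈ 𝒣.G 1 := by
        have := hi1 1 _ hy
        rwa [map_sub, map_one] at this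
      have hi2y : i2 y - 1 ∈ 𝒣.G 1 := by
        have := hi2 1 _ hy
        rwa [map_sub, map_one] at this
      have h1 : Δ (Lfun F y) = Lfun F' (Δ y) := hom_log 𝒢 𝒣 Δ hΔ hy
      have h2 : i1 (Lfun F y) = Lfun F' (i1 y) := hom_log 𝒢 𝒣 i1 hi1 hy
      have h3 : i2 (Lfun F y) = Lfun F' (i2 y) := hom_log 𝒢 𝒣 i2 hi2 hy
      rw [h1, h2, h3, hgrp]
      exact 𝒣.log_mul hi1y hi2y (hcomm y y)
    · exact (hεF _).mpr (𝒢.log_mem hy)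
  · intro x _ hε
    exact 𝒢.log_exp ((hεF x).mp hε)
  · intro y _ hε
    have hy : y - 1 ∈ 𝒢.G 1 := by
      refine (hεF _).mp ?_
      rw [map_sub, map_one, hε, sub_self]
    exact 𝒢.exp_log hy
end
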